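/- For every integer p ≥ 1, every i ∈ {1,…,n}, and all indices j₁,…,j_p ∈ {1,…,n}, the endomorphism Y_{j₁}∘⋯∘Y_{j_p}∘m_{xᵢ} of 𝔽[x₁,…,xₙ] lies in the 𝔽-linear span, inside End_𝔽(𝔽[x₁,…,xₙ]), of the set of endomorphisms of the form m_{x_k}∘Y_{l₁}∘⋯∘Y_{l_p} (with k, l₁,…,l_p ∈ {1,…,n}) together with those of the form w∘Y_{l₁}∘⋯∘Y_{l_{p−1}} (with w ∈ 𝔖ₙ acting by permutation of variables and l₁,…,l_{p−1} ∈ {1,…,n}). -/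

import Mathlib

open MvPolynomial

noncomputable section

variable (F : Type) [Field F] [CharZero F] {n : ℕ}

/-- The action of a permutation `w` on polynomials, permuting the variables. -/
def permOp (w : Equiv.Perm (Fin n)) : Module.End F (MvPolynomial (Fin n) F) :=
  (MvPolynomial.rename (⇑w)).toLinearMap

/-- The operator exchanging the variables `xᵢ` and `xⱼ`. -/
def swapOp (i j : Fin n) : Module.End F (MvPolynomial (Fin n) F) :=
  permOp F (Equiv.swap i j)

theorem delta_existsUnique (i j : Fin n) (hij : i ≠ j) (f : MvPolynomial (Fin n) F) :
    ∃! g : MvPolynomial (Fin n) F,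
      (X i - X j) * g = f - MvPolynomial.rename (⇑(Equiv.swap i j)) f := by
  have hne : (X i - X j : MvPolynomial (Fin n) F) ≠ 0 :=
    sub_ne_zero_of_ne (fun h => hij (MvPolynomial.X_injective h))
  have hex : ∃ g : MvPolynomial (Fin n) F,
      (X i - X j) * g = f - MvPolynomial.rename (⇑(Equiv.swap i j)) f := by
    induction f using MvPolynomial.induction_on with
    | C a => exact ⟨0, by simp⟩
    | add p q hp hq =>
      obtain ⟨g1, h1⟩ := hp
      obtain ⟨g2, h2⟩ := hq
      exact ⟨g1 + g2, by rw [map_add]; linear_combination h1 + h2⟩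
    | mul_X p k hp =>
      obtain ⟨g, hg⟩ := hp
      have hren : MvPolynomial.rename (⇑(Equiv.swap i j)) (p * X k) =
          MvPolynomial.rename (⇑(Equiv.swap i j)) p * X (Equiv.swap i j k) := by
        simp
      rcases eq_or_ne k i with rfl | hki
      · refine ⟨p + g * X j, ?_⟩
        rw [hren, Equiv.swap_apply_left]
        linear_combination X j * hg
      rcases eq_or_ne k j with rfl | hkj
      · refine ⟨-p + g * X i, ?_⟩
        rw [hren, Equiv.swap_apply_right]
        linear_combination X i * hg
      · refine ⟨g * X k, ?_⟩
        rw [hren, Equiv.swap_apply_of_ne_of_ne hki hkj]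
        linear_combination X k * hg
  obtain ⟨g, hg⟩ := hex
  exact ⟨g, hg, fun y hy => mul_left_cancel₀ hne (hy.trans hg.symm)⟩

/-- The divided-difference operator `Δ_{ij} = (xᵢ - xⱼ)⁻¹ (1 - s_{ij})`. -/
def Delta (i j : Fin n) : Module.End F (MvPolynomial (Fin n) F) where
  toFun f :=
    if h : i ≠ j then (delta_existsUnique F i j h f).exists.choose else 0
  map_add' f g := by
    by_cases h : i ≠ j
    · simp only [dif_pos h]
      apply (delta_existsUnique F i j h (f + g)).unique
      · exact (delta_existsUnique F i j h (f + g)).exists.choose_spec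
      · rw [mul_add, (delta_existsUnique F i j h f).exists.choose_spec,
          (delta_existsUnique F i j h g).exists.choose_spec, map_add]
        ring
    · simp [dif_neg h]
  map_smul' c f := by
    by_cases h : i ≠ j
    · simp only [dif_pos h, RingHom.id_apply]
      apply (delta_existsUnique F i j h (c • f)).unique
      · exact (delta_existsUnique F i j h (c • f)).exists.choose_spec
      · rw [Algebra.mul_smul_comm, (delta_existsUnique F i j h f).exists.choose_spec,
          map_smul, smul_sub]
    · simp [dif_neg h]

/-- The Dunkl operator `Yᵢ = κ ∂ᵢ + Σ_{j ≠ i} Δ_{ij}`. -/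
def Dunkl (κ : F) (i : Fin n) : Module.End F (MvPolynomial (Fin n) F) :=
  κ • (MvPolynomial.pderiv i).toLinearMap + ∑ j ∈ Finset.univ.erase i, Delta F i j

/-- The trigonometric Dunkl (Cherednik) operator `Uᵢ = xᵢ Yᵢ + Σ_{j < i} s_{ji}`. -/
def Cher (κ : F) (i : Fin n) : Module.End F (MvPolynomial (Fin n) F) :=
  LinearMap.mulLeft F (X i) * Dunkl F κ i +
    ∑ j ∈ Finset.univ.filter (fun j => j < i), swapOp F j i


section Aux17

lemma Delta_spec (i j : Fin n) (h : i ≠ j) (f : MvPolynomial (Fin n) F) :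
    (X i - X j) * Delta F i j f = f - MvPolynomial.rename (⇑(Equiv.swap i j)) f := by
  have : Delta F i j f = (delta_existsUnique F i j h f).exists.choose := by
    simp only [Delta, LinearMap.coe_mk, AddHom.coe_mk, dif_pos h]
  rw [this]
  exact (delta_existsUnique F i j h f).exists.choose_spec

lemma Delta_eq (i j : Fin n) (h : i ≠ j) (f g : MvPolynomial (Fin n) F)
    (hg : (X i - X j) * g = f - MvPolynomial.rename (⇑(Equiv.swap i j)) f) :
    Delta F i j f = g := by
  have hne : (X i - X j : MvPolynomial (Fin n) F) ≠ 0 :=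
    sub_ne_zero_of_ne (fun hh => h (MvPolynomial.X_injective hh))
  exact mul_left_cancel₀ hne ((Delta_spec F i j h f).trans hg.symm)

lemma Delta_mul_X_left (i k : Fin n) (h : i ≠ k) (f : MvPolynomial (Fin n) F) :
    Delta F i k (X i * f) = X i * Delta F i k f + MvPolynomial.rename (⇑(Equiv.swap i k)) f := by
  apply Delta_eq F i k h
  have hs := Delta_spec F i k h f
  have hren : MvPolynomial.rename (⇑(Equiv.swap i k)) (X i * f) =
      X k * MvPolynomial.rename (⇑(Equiv.swap i k)) f := by
    rw [map_mul, rename_X, Equiv.swap_apply_left]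
  rw [hren]
  linear_combination X i * hs

lemma Delta_mul_X_right (i k : Fin n) (h : i ≠ k) (f : MvPolynomial (Fin n) F) :
    Delta F i k (X k * f) = X k * Delta F i k f - MvPolynomial.rename (⇑(Equiv.swap i k)) f := by
  apply Delta_eq F i k h
  have hs := Delta_spec F i k h f
  have hren : MvPolynomial.rename (⇑(Equiv.swap i k)) (X k * f) =
      X i * MvPolynomial.rename (⇑(Equiv.swap i k)) f := by
    rw [map_mul, rename_X, Equiv.swap_apply_right]
  rw [hren]
  linear_combination X k * hs

lemma Delta_mul_X_other (i k m : Fin n) (h : i ≠ k) (hm : m ≠ i) (hm' : m ≠ k)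
    (f : MvPolynomial (Fin n) F) :
    Delta F i k (X m * f) = X m * Delta F i k f := by
  apply Delta_eq F i k h
  have hs := Delta_spec F i k h f
  have hren : MvPolynomial.rename (⇑(Equiv.swap i k)) (X m * f) =
      X m * MvPolynomial.rename (⇑(Equiv.swap i k)) f := by
    rw [map_mul, rename_X, Equiv.swap_apply_of_ne_of_ne hm hm']
  rw [hren]
  linear_combination X m * hs

/-- The commutator `[Yⱼ, m_{xᵢ}]`. -/
lemma dunkl_mulLeft (κ : F) (j i : Fin n) :
    Dunkl F κ j * LinearMap.mulLeft F (X i) =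
      LinearMap.mulLeft F (X i) * Dunkl F κ j +
        (if i = j then
            κ • (1 : Module.End F (MvPolynomial (Fin n) F)) +
              ∑ k ∈ Finset.univ.erase j, swapOp F j k
          else -(swapOp F j i)) := by
  refine LinearMap.ext fun f => ?_
  simp only [Module.End.mul_apply, LinearMap.mulLeft_apply, LinearMap.add_apply, Dunkl,
    LinearMap.smul_apply, LinearMap.sum_apply, Derivation.coeFn_coe]
  by_cases hij : i = j
  · subst hij
    simp only [if_pos rfl, LinearMap.add_apply, LinearMap.smul_apply, Module.End.one_apply,
      LinearMap.sum_apply]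
    have hp : (MvPolynomial.pderiv i) (X i * f) = X i * (MvPolynomial.pderiv i) f + f := by
      rw [pderiv_mul, pderiv_X_self]; ring
    have hsum : ∀ k ∈ Finset.univ.erase i,
        Delta F i k (X i * f) = X i * Delta F i k f + swapOp F i k f := by
      intro k hk
      have hik : i ≠ k := (Finset.ne_of_mem_erase hk).symm
      rw [Delta_mul_X_left F i k hik f]
      rfl
    rw [Finset.sum_congr rfl hsum, hp, if_pos trivial]
    simp only [LinearMap.add_apply, LinearMap.smul_apply, Module.End.one_apply,
      LinearMap.sum_apply, Finset.sum_add_distrib, smul_add, Finset.mul_sum, mul_add,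
      mul_smul_comm]
    abel
  · simp only [if_neg hij, LinearMap.neg_apply]
    have hp : (MvPolynomial.pderiv j) (X i * f) = X i * (MvPolynomial.pderiv j) f := by
      rw [pderiv_mul, pderiv_X_of_ne hij]
      ring
    have hi : i ∈ Finset.univ.erase j := Finset.mem_erase.2 ⟨hij, Finset.mem_univ i⟩
    rw [← Finset.add_sum_erase _ _ hi, ← Finset.add_sum_erase _ _ hi]
    have h1 : Delta F j i (X i * f) = X i * Delta F j i f - swapOp F j i f := by
      rw [Delta_mul_X_right F j i (Ne.symm hij) f]; rfl
    have h2 : ∀ k ∈ (Finset.univ.erase j).erase i,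
        Delta F j k (X i * f) = X i * Delta F j k f := by
      intro k hk
      have hki : k ≠ i := Finset.ne_of_mem_erase hk
      have hkj : k ≠ j := Finset.ne_of_mem_erase (Finset.mem_of_mem_erase hk)
      exact Delta_mul_X_other F j k i (Ne.symm hkj) hij (Ne.symm hki) f
    rw [Finset.sum_congr rfl h2, h1, hp]
    simp only [Finset.mul_sum, mul_add, mul_smul_comm, LinearMap.neg_apply]
    abel

lemma rename_Delta (w : Equiv.Perm (Fin n)) (i k : Fin n) (h : i ≠ k)
    (f : MvPolynomial (Fin n) F) :
    Delta F (w i) (w k) (MvPolynomial.rename (⇑w) f) =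
      MvPolynomial.rename (⇑w) (Delta F i k f) := by
  apply Delta_eq F (w i) (w k) (fun hh => h (w.injective hh))
  have hs := Delta_spec F i k h f
  have key : MvPolynomial.rename (⇑w) ((X i - X k) * Delta F i k f) =
      MvPolynomial.rename (⇑w) (f - MvPolynomial.rename (⇑(Equiv.swap i k)) f) := by rw [hs]
  rw [map_mul, map_sub, map_sub, rename_X, rename_X, rename_rename] at key
  rw [key, rename_rename, ← w.injective.swap_comp i k, ← rename_rename]

lemma permOp_dunkl (κ : F) (w : Equiv.Perm (Fin n)) (i : Fin n) :
    permOp F w * Dunkl F κ i = Dunkl F κ (w i) * permOp F w := by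
  refine LinearMap.ext fun f => ?_
  simp only [Module.End.mul_apply, Dunkl, LinearMap.add_apply, LinearMap.smul_apply,
    LinearMap.sum_apply, permOp, AlgHom.toLinearMap_apply, Derivation.coeFn_coe]
  rw [map_add, map_smul, ← pderiv_rename w.injective i f]
  congr 1
  rw [map_sum]
  refine Finset.sum_equiv w ?_ ?_
  · intro k
    simp [Finset.mem_erase, w.injective.eq_iff]
  · intro k hk
    have hik : i ≠ k := (Finset.ne_of_mem_erase hk).symm
    exact (rename_Delta F w i k hik f).symm

lemma dunkl_permOp (κ : F) (j : Fin n) (w : Equiv.Perm (Fin n)) :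
    Dunkl F κ j * permOp F w = permOp F w * Dunkl F κ (w⁻¹ j) := by
  have := permOp_dunkl F κ w (w⁻¹ j)
  rw [Equiv.Perm.inv_def, Equiv.apply_symm_apply] at this
  exact this.symm

lemma permOp_one : permOp F (1 : Equiv.Perm (Fin n)) = 1 := by
  ext f
  simp [permOp]

/-- The commutator `[Yⱼ, m_{xᵢ}]` lies in the span of the permutation operators. -/
lemma comm_mem (κ : F) (j i : Fin n) :
    Dunkl F κ j * LinearMap.mulLeft F (X i) - LinearMap.mulLeft F (X i) * Dunkl F κ j ∈
      Submodule.span F (Set.range (permOp F (n := n))) := by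
  rw [dunkl_mulLeft, add_sub_cancel_left]
  by_cases hij : i = j
  · rw [if_pos hij]
    refine Submodule.add_mem _ (Submodule.smul_mem _ _ ?_) (Submodule.sum_mem _ fun k _ => ?_)
    · rw [← permOp_one F]
      exact Submodule.subset_span ⟨1, rfl⟩
    · exact Submodule.subset_span ⟨Equiv.swap j k, rfl⟩
  · rw [if_neg hij]
    exact Submodule.neg_mem _ (Submodule.subset_span ⟨Equiv.swap j i, rfl⟩)

/-- The spanning set of operators. -/
def Sset (κ : F) (q : ℕ) : Set (Module.End F (MvPolynomial (Fin n) F)) :=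
  {e : Module.End F (MvPolynomial (Fin n) F) |
      ∃ (k : Fin n) (ls : List (Fin n)), ls.length = q ∧
        e = LinearMap.mulLeft F (X k) * (ls.map (Dunkl F κ)).prod} ∪
  {e : Module.End F (MvPolynomial (Fin n) F) |
      ∃ (w : Equiv.Perm (Fin n)) (ls : List (Fin n)), ls.length = q - 1 ∧
        e = permOp F w * (ls.map (Dunkl F κ)).prod}

lemma comm_mul_prod_mem (κ : F) (C : Module.End F (MvPolynomial (Fin n) F))
    (hC : C ∈ Submodule.span F (Set.range (permOp F (n := n)))) (ls : List (Fin n)) :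
    C * (ls.map (Dunkl F κ)).prod ∈ Submodule.span F (Sset F κ (ls.length + 1)) := by
  induction hC using Submodule.span_induction with
  | mem e he =>
    obtain ⟨w, rfl⟩ := he
    exact Submodule.subset_span (Or.inr ⟨w, ls, by simp, rfl⟩)
  | zero => simp
  | add a b _ _ ha hb => rw [add_mul]; exact Submodule.add_mem _ ha hb
  | smul r a _ ha => rw [smul_mul_assoc]; exact Submodule.smul_mem _ r ha

lemma step (κ : F) (j : Fin n) (q : ℕ) (hq : 1 ≤ q)
    (e : Module.End F (MvPolynomial (Fin n) F)) (he : e ∈ Submodule.span F (Sset F κ q)) :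
    Dunkl F κ j * e ∈ Submodule.span F (Sset F κ (q + 1)) := by
  induction he using Submodule.span_induction with
  | mem e he =>
    rcases he with ⟨k, ls, hls, rfl⟩ | ⟨w, ls, hls, rfl⟩
    · have key : Dunkl F κ j * (LinearMap.mulLeft F (X k) * (ls.map (Dunkl F κ)).prod) =
          LinearMap.mulLeft F (X k) * ((j :: ls).map (Dunkl F κ)).prod +
            (Dunkl F κ j * LinearMap.mulLeft F (X k) -
              LinearMap.mulLeft F (X k) * Dunkl F κ j) * (ls.map (Dunkl F κ)).prod := by
        simp only [List.map_cons, List.prod_cons, sub_mul, mul_assoc]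
        abel
      rw [key]
      refine Submodule.add_mem _ ?_ ?_
      · exact Submodule.subset_span (Or.inl ⟨k, j :: ls, by simp [hls], rfl⟩)
      · have := comm_mul_prod_mem F κ _ (comm_mem F κ j k) ls
        rwa [hls] at this
    · have key : Dunkl F κ j * (permOp F w * (ls.map (Dunkl F κ)).prod) =
          permOp F w * (((w⁻¹ j) :: ls).map (Dunkl F κ)).prod := by
        simp only [List.map_cons, List.prod_cons, ← mul_assoc, dunkl_permOp]
      rw [key]
      refine Submodule.subset_span (Or.inr ⟨w, (w⁻¹ j) :: ls, ?_, rfl⟩)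
      simp [hls]
      omega
  | zero => simp
  | add a b _ _ ha hb => rw [mul_add]; exact Submodule.add_mem _ ha hb
  | smul r a _ ha => rw [mul_smul_comm]; exact Submodule.smul_mem _ r ha

lemma main_aux (κ : F) (i : Fin n) :
    ∀ js : List (Fin n), js ≠ [] →
      (js.map (Dunkl F κ)).prod * LinearMap.mulLeft F (X i) ∈
        Submodule.span F (Sset F κ js.length) := by
  intro js
  induction js with
  | nil => intro h; exact absurd rfl h
  | cons j js ih =>
    intro _
    rcases List.eq_nil_or_concat js with rfl | _
    · -- base case: single operator
      have key : (([j].map (Dunkl F κ)).prod) * LinearMap.mulLeft F (X i) =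
          LinearMap.mulLeft F (X i) * (([j].map (Dunkl F κ)).prod) +
            (Dunkl F κ j * LinearMap.mulLeft F (X i) -
              LinearMap.mulLeft F (X i) * Dunkl F κ j) * (([] : List (Fin n)).map (Dunkl F κ)).prod := by
        simp only [List.map_cons, List.map_nil, List.prod_cons, List.prod_nil, mul_one]
        abel
      rw [key]
      refine Submodule.add_mem _ ?_ ?_
      · exact Submodule.subset_span (Or.inl ⟨i, [j], rfl, rfl⟩)
      · exact comm_mul_prod_mem F κ _ (comm_mem F κ j i) []
    · have hne : js ≠ [] := by
        rintro rfl
        simp_all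
      have hq : 1 ≤ js.length := by
        cases js with
        | nil => exact absurd rfl hne
        | cons a l => simp
      have key : ((j :: js).map (Dunkl F κ)).prod * LinearMap.mulLeft F (X i) =
          Dunkl F κ j * ((js.map (Dunkl F κ)).prod * LinearMap.mulLeft F (X i)) := by
        simp only [List.map_cons, List.prod_cons, mul_assoc]
      rw [key]
      have : (j :: js).length = js.length + 1 := by simp
      rw [this]
      exact step F κ j js.length hq _ (ih hne)

end Aux17

theorem stmt17 (n : ℕ) (hn : 2 ≤ n) (κ : F) (p : ℕ) (hp : 1 ≤ p) (i : Fin n)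
    (js : List (Fin n)) (hjs : js.length = p) :
    (js.map (Dunkl F κ)).prod * LinearMap.mulLeft F (X i) ∈
      Submodule.span F
        ({e : Module.End F (MvPolynomial (Fin n) F) |
            ∃ (k : Fin n) (ls : List (Fin n)), ls.length = p ∧
              e = LinearMap.mulLeft F (X k) * (ls.map (Dunkl F κ)).prod} ∪
         {e : Module.End F (MvPolynomial (Fin n) F) |
            ∃ (w : Equiv.Perm (Fin n)) (ls : List (Fin n)), ls.length = p - 1 ∧
              e = permOp F w * (ls.map (Dunkl F κ)).prod}) := by
  subst hjs
  have h := main_aux F κ i js (by rintro rfl; simp at hp)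
  exact h
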